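/- arXiv:1605.04096 — 6 statements merged into one kernel-verified Lean document; each statement's English description precedes it below -/
import Mathlib

section
/- Let f : ℝ × ℝ → ℝ be smooth with f_xxx = 0 identically, and set λ(t) = exp(∫₀ᵗ f_xx(s, x₀) ds) for any fixed x₀ (well-defined since f_xx depends only on t). If u is a smooth solution of u_t + u·u_x + f·u_xx = 0, then ∂_t(λ·u) + ∂_x(λ·(u²/2 + f·u_x − f_x·u)) = 0 at every point. -/
/-- Partial derivative with respect to the first (time) variable. -/
noncomputable def ptd (u : ℝ → ℝ → ℝ) (t x : ℝ) : ℝ := deriv (fun s => u s x) t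

/-- Partial derivative with respect to the second (space) variable. -/
noncomputable def pxd (u : ℝ → ℝ → ℝ) (t x : ℝ) : ℝ := deriv (fun y => u t y) x

lemma pxd_smooth {v : ℝ → ℝ → ℝ} (hv : ContDiff ℝ (↑(⊤:ℕ∞)) (Function.uncurry v)) :
    ContDiff ℝ (↑(⊤:ℕ∞)) (Function.uncurry (pxd v)) := by
  have hfd := contDiff_infty_iff_fderiv.mp hv
  have key : ∀ t x : ℝ, pxd v t x = fderiv ℝ (Function.uncurry v) (t, x) (0, 1) := by
    intro t x
    have hc : HasDerivAt (fun y : ℝ => ((t : ℝ), y)) ((0 : ℝ), (1 : ℝ)) x :=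
      (hasDerivAt_const x t).prodMk (hasDerivAt_id x)
    have h1 : HasDerivAt (fun y => Function.uncurry v (t, y))
        (fderiv ℝ (Function.uncurry v) (t, x) (0, 1)) x :=
      (hfd.1 (t, x)).hasFDerivAt.comp_hasDerivAt x hc
    simpa [pxd, Function.uncurry] using h1.deriv
  have he : Function.uncurry (pxd v)
      = fun p : ℝ × ℝ => fderiv ℝ (Function.uncurry v) p (0, 1) := by
    funext p; exact key p.1 p.2
  rw [he]
  exact hfd.2.clm_apply contDiff_const

lemma ptd_smooth {v : ℝ → ℝ → ℝ} (hv : ContDiff ℝ (↑(⊤:ℕ∞)) (Function.uncurry v)) :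
    ContDiff ℝ (↑(⊤:ℕ∞)) (Function.uncurry (ptd v)) := by
  have hfd := contDiff_infty_iff_fderiv.mp hv
  have key : ∀ t x : ℝ, ptd v t x = fderiv ℝ (Function.uncurry v) (t, x) (1, 0) := by
    intro t x
    have hc : HasDerivAt (fun s : ℝ => (s, (x : ℝ))) ((1 : ℝ), (0 : ℝ)) t :=
      (hasDerivAt_id t).prodMk (hasDerivAt_const t x)
    have h1 : HasDerivAt (fun s => Function.uncurry v (s, x))
        (fderiv ℝ (Function.uncurry v) (t, x) (1, 0)) t :=
      (hfd.1 (t, x)).hasFDerivAt.comp_hasDerivAt (l := Function.uncurry v) t hc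
    simpa [ptd, Function.uncurry] using h1.deriv
  have he : Function.uncurry (ptd v)
      = fun p : ℝ × ℝ => fderiv ℝ (Function.uncurry v) p (1, 0) := by
    funext p; exact key p.1 p.2
  rw [he]
  exact hfd.2.clm_apply contDiff_const

lemma diffx {v : ℝ → ℝ → ℝ} (hv : ContDiff ℝ (↑(⊤:ℕ∞)) (Function.uncurry v)) (t x : ℝ) :
    DifferentiableAt ℝ (fun y => v t y) x :=
  (hv.differentiable (by simp) (t, x)).comp x
    ((differentiableAt_const t).prodMk differentiableAt_id)

lemma difft {v : ℝ → ℝ → ℝ} (hv : ContDiff ℝ (↑(⊤:ℕ∞)) (Function.uncurry v)) (t x : ℝ) :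
    DifferentiableAt ℝ (fun s => v s x) t :=
  (hv.differentiable (by simp) (t, x)).comp (g := Function.uncurry v) (f := fun s => (s, x)) t
    (differentiableAt_id.prodMk (differentiableAt_const x))

theorem stmt3 (f u : ℝ → ℝ → ℝ) (x₀ : ℝ) (lam : ℝ → ℝ)
    (hf : ContDiff ℝ (⊤ : ℕ∞) (Function.uncurry f))
    (hfxxx : ∀ t x, pxd (pxd (pxd f)) t x = 0)
    (hlam : ∀ t, lam t = Real.exp (∫ s in (0:ℝ)..t, pxd (pxd f) s x₀))
    (hu : ContDiff ℝ (⊤ : ℕ∞) (Function.uncurry u))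
    (hsol : ∀ t x, ptd u t x + u t x * pxd u t x + f t x * pxd (pxd u) t x = 0) :
    ∀ t x, ptd (fun t x => lam t * u t x) t x
      + pxd (fun t x => lam t * ((u t x) ^ 2 / 2 + f t x * pxd u t x
          - pxd f t x * u t x)) t x = 0 := by
  intro t x
  have hf' : ContDiff ℝ (↑(⊤:ℕ∞)) (Function.uncurry f) := hf.of_le (by simp)
  have hu' : ContDiff ℝ (↑(⊤:ℕ∞)) (Function.uncurry u) := hu.of_le (by simp)
  have hfx := pxd_smooth hf'
  have hfxx := pxd_smooth hfx
  have hfxxx' := pxd_smooth hfxx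
  have hux := pxd_smooth hu'
  -- g : time-dependent part of f_xx
  set g : ℝ → ℝ := fun s => pxd (pxd f) s x₀ with hg
  have hgc : Continuous g := by
    have := hfxx.continuous
    exact this.comp (continuous_id.prodMk continuous_const)
  -- lam derivative
  have hlamfun : lam = fun t => Real.exp (∫ s in (0:ℝ)..t, g s) := funext hlam
  have hI : HasDerivAt (fun t => ∫ s in (0:ℝ)..t, g s) (g t) t :=
    intervalIntegral.integral_hasDerivAt_right (hgc.intervalIntegrable 0 t)
      (hgc.stronglyMeasurableAtFilter _ _) hgc.continuousAt
  have hlam' : HasDerivAt lam (g t * lam t) t := by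
    rw [hlamfun]
    simpa [hlamfun, mul_comm] using hI.exp
  -- f_xx is constant in x
  have hfxxconst : pxd (pxd f) t x = g t := by
    have hd : Differentiable ℝ (fun y => pxd (pxd f) t y) := fun y => diffx hfxx t y
    have hz : ∀ y, deriv (fun y => pxd (pxd f) t y) y = 0 := fun y => hfxxx t y
    exact is_const_of_deriv_eq_zero hd hz x x₀
  -- time part
  have hut : HasDerivAt (fun s => u s x) (ptd u t x) t :=
    (difft hu' t x).hasDerivAt
  have h1 : HasDerivAt (fun s => lam s * u s x)
      (g t * lam t * u t x + lam t * ptd u t x) t := hlam'.mul hut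
  have hptd : ptd (fun t x => lam t * u t x) t x
      = g t * lam t * u t x + lam t * ptd u t x := h1.deriv
  -- space part
  have hux' : HasDerivAt (fun y => u t y) (pxd u t x) x := (diffx hu' t x).hasDerivAt
  have hfx' : HasDerivAt (fun y => f t y) (pxd f t x) x := (diffx hf' t x).hasDerivAt
  have huxx : HasDerivAt (fun y => pxd u t y) (pxd (pxd u) t x) x :=
    (diffx hux t x).hasDerivAt
  have hfxx' : HasDerivAt (fun y => pxd f t y) (pxd (pxd f) t x) x :=
    (diffx hfx t x).hasDerivAt
  have h2 : HasDerivAt (fun y => lam t * ((u t y) ^ 2 / 2 + f t y * pxd u t y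
      - pxd f t y * u t y))
      (lam t * ((u t x * pxd u t x)
        + (pxd f t x * pxd u t x + f t x * pxd (pxd u) t x)
        - (pxd (pxd f) t x * u t x + pxd f t x * pxd u t x))) x := by
    have hsq : HasDerivAt (fun y => (u t y) ^ 2 / 2) (u t x * pxd u t x) x := by
      have := (hux'.fun_pow 2).div_const 2
      exact this.congr_deriv (by norm_num; ring)
    exact (((hsq.add (hfx'.mul huxx)).sub (hfxx'.mul hux')).const_mul (lam t))
  have hpxd : pxd (fun t x => lam t * ((u t x) ^ 2 / 2 + f t x * pxd u t x
      - pxd f t x * u t x)) t x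
      = lam t * ((u t x * pxd u t x)
        + (pxd f t x * pxd u t x + f t x * pxd (pxd u) t x)
        - (pxd (pxd f) t x * u t x + pxd f t x * pxd u t x)) := h2.deriv
  rw [hptd, hpxd, hfxxconst]
  have hs := hsol t x
  linear_combination lam t * hs
end

section
/- Let f be smooth with f_xxx = 0, λ(t) = e^{∫ f_xx dt}, and suppose smooth functions u, v satisfy v_x = λ·u and v_t = −λ·(u²/2 + f·u_x − f_x·u). Then v satisfies v_t + (1/(2λ))·(v_x)² + f·v_xx − f_x·v_x = 0 at every point. -/
theorem stmt4 (f u v : ℝ → ℝ → ℝ) (x₀ : ℝ) (lam : ℝ → ℝ)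
    (hf : ContDiff ℝ (⊤ : ℕ∞) (Function.uncurry f))
    (hfxxx : ∀ t x, pxd (pxd (pxd f)) t x = 0)
    (hlam : ∀ t, lam t = Real.exp (∫ s in (0:ℝ)..t, pxd (pxd f) s x₀))
    (hu : ContDiff ℝ (⊤ : ℕ∞) (Function.uncurry u))
    (hv : ContDiff ℝ (⊤ : ℕ∞) (Function.uncurry v))
    (h1 : ∀ t x, pxd v t x = lam t * u t x)
    (h2 : ∀ t x, ptd v t x
      = -(lam t) * ((u t x) ^ 2 / 2 + f t x * pxd u t x - pxd f t x * u t x)) :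
    ∀ t x, ptd v t x + (1 / (2 * lam t)) * (pxd v t x) ^ 2
      + f t x * pxd (pxd v) t x - pxd f t x * pxd v t x = 0 := by
  intro t x
  have hlpos : lam t ≠ 0 := by rw [hlam]; exact (Real.exp_pos _).ne'
  have hud : Differentiable ℝ (fun y => u t y) :=
    by have h := (hu.differentiable (by simp)).comp ((differentiable_const t).prodMk differentiable_id); exact h
  have hvxx : pxd (pxd v) t x = lam t * pxd u t x := by
    have : (fun y => pxd v t y) = fun y => lam t * u t y := funext (h1 t)
    rw [pxd, this, deriv_const_mul _ (hud x)]; rfl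
  rw [h1, h2, hvxx]
  field_simp
  ring
end

section
/- The set of transformations of ℝ⁴ (coordinates t, x, v, f) given by (t, x, v, f) ↦ (αt + β, κ(x + μ₁t + μ₀), (κ²/α)(v + (μ₁/2)x + (μ₁²/4)t + ν), (κ²/α)f) with α ≠ 0, κ ≠ 0, is closed under composition and inverses, i.e., it forms a group under composition. -/
/-- The equivalence transformations of the class of generalized potential
Burgers equations, acting on `(t, x, v, f) ∈ ℝ⁴`. -/
def potEquiv : Set ((ℝ × ℝ × ℝ × ℝ) → (ℝ × ℝ × ℝ × ℝ)) :=
  {g | ∃ α β κ μ₁ μ₀ ν : ℝ, α ≠ 0 ∧ κ ≠ 0 ∧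
    g = fun p => (α * p.1 + β, κ * (p.2.1 + μ₁ * p.1 + μ₀),
      κ ^ 2 / α * (p.2.2.1 + μ₁ / 2 * p.2.1 + μ₁ ^ 2 / 4 * p.1 + ν),
      κ ^ 2 / α * p.2.2.2)}

namespace PotentialBurgers

noncomputable def equivMap (α β κ μ₁ μ₀ ν : ℝ) (p : ℝ × ℝ × ℝ × ℝ) : ℝ × ℝ × ℝ × ℝ :=
  (α * p.1 + β, κ * (p.2.1 + μ₁ * p.1 + μ₀),
    κ ^ 2 / α * (p.2.2.1 + μ₁ / 2 * p.2.1 + μ₁ ^ 2 / 4 * p.1 + ν),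
    κ ^ 2 / α * p.2.2.2)

theorem mem_potEquiv_iff {g : (ℝ × ℝ × ℝ × ℝ) → (ℝ × ℝ × ℝ × ℝ)} :
    g ∈ potEquiv ↔ ∃ α β κ μ₁ μ₀ ν : ℝ, α ≠ 0 ∧ κ ≠ 0 ∧ g = equivMap α β κ μ₁ μ₀ ν :=
  Iff.rfl

theorem equivMap_one : equivMap 1 0 1 0 0 0 = id := by
  funext p
  simp [equivMap]

theorem equivMap_comp {α' κ' : ℝ} (hα' : α' ≠ 0) (hκ' : κ' ≠ 0) (α β κ μ₁ μ₀ ν β' μ₁' μ₀' ν' : ℝ) :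
    equivMap α β κ μ₁ μ₀ ν ∘ equivMap α' β' κ' μ₁' μ₀' ν' =
      equivMap (α * α') (α * β' + β) (κ * κ') (μ₁' + μ₁ * α' / κ')
        (μ₀' + (μ₁ * β' + μ₀) / κ')
        (ν' + α' / κ' ^ 2 * (μ₁ * κ' * μ₀' / 2 + μ₁ ^ 2 * β' / 4 + ν)) := by
  funext p
  simp only [Function.comp_apply, equivMap, Prod.mk.injEq]
  refine ⟨by ring, by field_simp; ring, by field_simp; ring, by field_simp⟩

/-- Parameters obtained by solving `equivMap_comp` for the identity parameters
`(1, 0, 1, 0, 0, 0)`. -/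
noncomputable def equivMapInv (α β κ μ₁ μ₀ ν : ℝ) : ℝ × ℝ × ℝ × ℝ → ℝ × ℝ × ℝ × ℝ :=
  equivMap α⁻¹ (-β / α) κ⁻¹ (-μ₁ * κ / α) (μ₁ * κ * β / α - μ₀ * κ)
    (κ ^ 2 / α * (μ₁ * μ₀ / 2 - μ₁ ^ 2 * β / (4 * α) - ν))

theorem equivMap_comp_equivMapInv {α κ : ℝ} (hα : α ≠ 0) (hκ : κ ≠ 0) (β μ₁ μ₀ ν : ℝ) :
    equivMap α β κ μ₁ μ₀ ν ∘ equivMapInv α β κ μ₁ μ₀ ν = id := by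
  rw [equivMapInv, equivMap_comp (inv_ne_zero hα) (inv_ne_zero hκ), ← equivMap_one]
  congr 1 <;> field_simp <;> ring

theorem equivMapInv_comp_equivMap {α κ : ℝ} (hα : α ≠ 0) (hκ : κ ≠ 0) (β μ₁ μ₀ ν : ℝ) :
    equivMapInv α β κ μ₁ μ₀ ν ∘ equivMap α β κ μ₁ μ₀ ν = id := by
  rw [equivMapInv, equivMap_comp hα hκ, ← equivMap_one]
  congr 1 <;> field_simp <;> ring

end PotentialBurgers

theorem stmt6 :
    (∀ g ∈ potEquiv, ∀ h ∈ potEquiv, g ∘ h ∈ potEquiv) ∧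
    (∀ g ∈ potEquiv, ∃ g' ∈ potEquiv, g ∘ g' = id ∧ g' ∘ g = id) := by
  simp only [PotentialBurgers.mem_potEquiv_iff]
  constructor
  · rintro _ ⟨α, β, κ, μ₁, μ₀, ν, hα, hκ, rfl⟩ _ ⟨α', β', κ', μ₁', μ₀', ν', hα', hκ', rfl⟩
    exact ⟨_, _, _, _, _, _, mul_ne_zero hα hα', mul_ne_zero hκ hκ',
      PotentialBurgers.equivMap_comp hα' hκ' ..⟩
  · rintro _ ⟨α, β, κ, μ₁, μ₀, ν, hα, hκ, rfl⟩
    exact ⟨PotentialBurgers.equivMapInv α β κ μ₁ μ₀ ν,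
      ⟨_, _, _, _, _, _, inv_ne_zero hα, inv_ne_zero hκ, rfl⟩,
      PotentialBurgers.equivMap_comp_equivMapInv hα hκ ..,
      PotentialBurgers.equivMapInv_comp_equivMap hα hκ ..⟩
end

section
/- Let f ≠ 0 be a real constant, let α, β, γ, δ, κ, μ₁, μ₀ be constants with αδ − βγ ≠ 0 and κ ≠ 0, and suppose γ ≠ 0. Define F¹(t,x) = k·√|γt + δ|·exp(−(γx − μ₁δ + μ₀γ)²/(4fγ(γt + δ))) for a nonzero constant k, on the region where γt + δ > 0. Then F¹ satisfies the backward heat equation condition needed for the equivalence transformation; specifically, F¹_t + f·F¹_{xx} = ((X¹_t x + X⁰_t)/X¹)·F¹_x where X¹(t) = κ/(γt+δ) and X⁰(t) = κ(μ₁t+μ₀)/(γt+δ). -/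
open Real

theorem hasDerivAt_affine_div_affine {a b γ δ s : ℝ} (hs : γ * s + δ ≠ 0) :
    HasDerivAt (fun s => (a * s + b) / (γ * s + δ)) ((a * δ - b * γ) / (γ * s + δ) ^ 2) s := by
  have hnum : HasDerivAt (fun s => a * s + b) a s := by
    simpa using ((hasDerivAt_id s).const_mul a).add_const b
  have hden : HasDerivAt (fun s => γ * s + δ) γ s := by
    simpa using ((hasDerivAt_id s).const_mul γ).add_const δ
  exact (hnum.div hden hs).congr_deriv (by ring)

namespace GaussianKernel

variable {f γ δ m k : ℝ} {F : ℝ → ℝ → ℝ}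
  (hF : ∀ t x, F t x = k * √|γ * t + δ| * exp (-(γ * x + m) ^ 2 / (4 * f * γ * (γ * t + δ))))
include hF

theorem hasDerivAt_space (hf : f ≠ 0) (hγ : γ ≠ 0) {t : ℝ} (hc : γ * t + δ ≠ 0) (x : ℝ) :
    HasDerivAt (F t) (-(γ * x + m) / (2 * f * (γ * t + δ)) * F t x) x := by
  have hp : HasDerivAt (fun y => γ * y + m) γ x := by
    simpa using ((hasDerivAt_id x).const_mul γ).add_const m
  have h : HasDerivAt (fun y => k * √|γ * t + δ| *
      exp (-(γ * y + m) ^ 2 / (4 * f * γ * (γ * t + δ)))) _ x :=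
    (((hp.pow 2).neg.div_const (4 * f * γ * (γ * t + δ))).exp).const_mul (k * √|γ * t + δ|)
  simp only [Pi.neg_apply, Pi.pow_apply] at h
  rw [show F t = _ from funext (hF t)]
  refine h.congr_deriv ?_
  field_simp
  ring

theorem pxd_eq (hf : f ≠ 0) (hγ : γ ≠ 0) {t : ℝ} (hc : γ * t + δ ≠ 0) (x : ℝ) :
    pxd F t x = -(γ * x + m) / (2 * f * (γ * t + δ)) * F t x :=
  (hasDerivAt_space hF hf hγ hc x).deriv

theorem pxd_pxd_eq (hf : f ≠ 0) (hγ : γ ≠ 0) {t : ℝ} (hc : γ * t + δ ≠ 0) (x : ℝ) :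
    pxd (pxd F) t x =
      ((γ * x + m) ^ 2 / (4 * f ^ 2 * (γ * t + δ) ^ 2) - γ / (2 * f * (γ * t + δ))) * F t x := by
  have hcoef : HasDerivAt (fun y => -(γ * y + m) / (2 * f * (γ * t + δ)))
      (-γ / (2 * f * (γ * t + δ))) x := by
    simpa using (((hasDerivAt_id x).const_mul γ).add_const m).neg.div_const (2 * f * (γ * t + δ))
  have h : HasDerivAt (fun y => -(γ * y + m) / (2 * f * (γ * t + δ)) * F t y) _ x :=
    hcoef.mul (hasDerivAt_space hF hf hγ hc x)
  rw [pxd, show (fun y => pxd F t y) = _ from funext (pxd_eq hF hf hγ hc), h.deriv]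
  field_simp
  ring

theorem ptd_eq (hf : f ≠ 0) (hγ : γ ≠ 0) {t : ℝ} (hc : 0 < γ * t + δ) (x : ℝ) :
    ptd F t x = (γ / (2 * (γ * t + δ)) + (γ * x + m) ^ 2 / (4 * f * (γ * t + δ) ^ 2)) * F t x := by
  have hloc : (fun s => F s x) =ᶠ[nhds t] fun s =>
      k * √(γ * s + δ) * exp (-(γ * x + m) ^ 2 / (4 * f * γ * (γ * s + δ))) := by
    have hopen : IsOpen {s : ℝ | 0 < γ * s + δ} := isOpen_lt continuous_const (by fun_prop)
    filter_upwards [hopen.mem_nhds hc] with s hs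
    rw [hF, abs_of_pos hs]
  have hlin : HasDerivAt (fun s => γ * s + δ) γ t := by
    simpa using ((hasDerivAt_id t).const_mul γ).add_const δ
  have hsqrt := ((Real.hasDerivAt_sqrt hc.ne').comp t hlin).const_mul k
  have hexp := ((hasDerivAt_const t (-(γ * x + m) ^ 2)).div (hlin.const_mul (4 * f * γ))
    (by positivity)).exp
  have hsq : √(γ * t + δ) ^ 2 = γ * t + δ := Real.sq_sqrt hc.le
  have h : HasDerivAt (fun s => k * √(γ * s + δ) *
      exp (-(γ * x + m) ^ 2 / (4 * f * γ * (γ * s + δ)))) _ t := hsqrt.mul hexp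
  simp only [Pi.div_apply, Function.comp_apply] at h
  rw [ptd, hloc.deriv_eq, h.deriv, hF, abs_of_pos hc]
  field_simp
  rw [hsq]
  ring

end GaussianKernel

theorem stmt7_general (f γ δ κ μ₁ μ₀ k : ℝ) (hf : f ≠ 0) (hγ : γ ≠ 0)
    (hκ : κ ≠ 0)
    (F1 : ℝ → ℝ → ℝ) (X1 X0 : ℝ → ℝ)
    (hF1 : ∀ t x, F1 t x = k * Real.sqrt |γ * t + δ| *
        Real.exp (-(γ * x - μ₁ * δ + μ₀ * γ) ^ 2 / (4 * f * γ * (γ * t + δ))))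
    (hX1 : ∀ t, X1 t = κ / (γ * t + δ))
    (hX0 : ∀ t, X0 t = κ * (μ₁ * t + μ₀) / (γ * t + δ)) :
    ∀ t x, γ * t + δ > 0 →
      ptd F1 t x + f * pxd (pxd F1) t x
        = ((deriv X1 t * x + deriv X0 t) / X1 t) * pxd F1 t x := by
  intro t x hc
  have hF : ∀ t x, F1 t x = k * √|γ * t + δ| *
      exp (-(γ * x + (μ₀ * γ - μ₁ * δ)) ^ 2 / (4 * f * γ * (γ * t + δ))) := by
    intro t x
    rw [hF1]
    ring_nf
  have hX1' : deriv X1 t = -(κ * γ) / (γ * t + δ) ^ 2 := by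
    rw [funext hX1]
    simpa using (hasDerivAt_affine_div_affine (a := 0) (b := κ) hc.ne').deriv
  have hX0' : deriv X0 t = (κ * μ₁ * δ - κ * μ₀ * γ) / (γ * t + δ) ^ 2 := by
    rw [funext hX0, ← (hasDerivAt_affine_div_affine (a := κ * μ₁) (b := κ * μ₀) hc.ne').deriv]
    congr 1
    ext s
    ring
  rw [GaussianKernel.ptd_eq hF hf hγ hc, GaussianKernel.pxd_pxd_eq hF hf hγ hc.ne',
    GaussianKernel.pxd_eq hF hf hγ hc.ne', hX1', hX0', hX1]
  field_simp
  ring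

theorem stmt7 (f α β γ δ κ μ₁ μ₀ k : ℝ) (hf : f ≠ 0) (hγ : γ ≠ 0) (hk : k ≠ 0)
    (hΔ : α * δ - β * γ ≠ 0) (hκ : κ ≠ 0)
    (F1 : ℝ → ℝ → ℝ) (X1 X0 : ℝ → ℝ)
    (hF1 : ∀ t x, F1 t x = k * Real.sqrt |γ * t + δ| *
        Real.exp (-(γ * x - μ₁ * δ + μ₀ * γ) ^ 2 / (4 * f * γ * (γ * t + δ))))
    (hX1 : ∀ t, X1 t = κ / (γ * t + δ))
    (hX0 : ∀ t, X0 t = κ * (μ₁ * t + μ₀) / (γ * t + δ)) :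
    ∀ t x, γ * t + δ > 0 →
      ptd F1 t x + f * pxd (pxd F1) t x
        = ((deriv X1 t * x + deriv X0 t) / X1 t) * pxd F1 t x :=
  stmt7_general f γ δ κ μ₁ μ₀ k hf hγ hκ F1 X1 X0 hF1 hX1 hX0
end

section
/- Let α, β, γ, δ, κ, μ₁, μ₀ be real constants with Δ := αδ − βγ ≠ 0 and κ ≠ 0, and let f : ℝ × ℝ → ℝ be smooth and nonzero. On the region γt + δ ≠ 0, define t̃ = (αt+β)/(γt+δ), x̃ = (κx + μ₁t + μ₀)/(γt+δ), ũ = (κ(γt+δ)u − κγx + μ₁δ − μ₀γ)/Δ, f̃ = (κ²/Δ)·f. If u is a smooth solution of u_t + u·u_x + f·u_xx = 0, then ũ (as a function of (t̃, x̃)) is a solution of ũ_{t̃} + ũ·ũ_{x̃} + f̃·ũ_{x̃x̃} = 0. -/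
open Function

lemma ptd_fderiv (w : ℝ → ℝ → ℝ) (hw : ContDiff ℝ (⊤ : ℕ∞) (uncurry w)) (a b : ℝ) :
    HasDerivAt (fun s => w s b) (fderiv ℝ (uncurry w) (a, b) (1, 0)) a := by
  have h := (hw.differentiable (by simp) (a, b)).hasFDerivAt
  have h2 : HasDerivAt (fun s : ℝ => (s, b)) ((1:ℝ), (0:ℝ)) a :=
    (hasDerivAt_id a).prodMk (hasDerivAt_const a b)
  exact h.comp_hasDerivAt a h2

lemma pxd_fderiv (w : ℝ → ℝ → ℝ) (hw : ContDiff ℝ (⊤ : ℕ∞) (uncurry w)) (a b : ℝ) :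
    HasDerivAt (fun y => w a y) (fderiv ℝ (uncurry w) (a, b) (0, 1)) b := by
  have h := (hw.differentiable (by simp) (a, b)).hasFDerivAt
  have h2 : HasDerivAt (fun y : ℝ => (a, y)) ((0:ℝ), (1:ℝ)) b :=
    (hasDerivAt_const b a).prodMk (hasDerivAt_id b)
  exact h.comp_hasDerivAt b h2

lemma ptd_eq (w : ℝ → ℝ → ℝ) (hw : ContDiff ℝ (⊤ : ℕ∞) (uncurry w)) (a b : ℝ) :
    ptd w a b = fderiv ℝ (uncurry w) (a, b) (1, 0) := (ptd_fderiv w hw a b).deriv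

lemma pxd_eq (w : ℝ → ℝ → ℝ) (hw : ContDiff ℝ (⊤ : ℕ∞) (uncurry w)) (a b : ℝ) :
    pxd w a b = fderiv ℝ (uncurry w) (a, b) (0, 1) := (pxd_fderiv w hw a b).deriv

lemma chainD (w : ℝ → ℝ → ℝ) (hw : ContDiff ℝ (⊤ : ℕ∞) (uncurry w)) {p q : ℝ → ℝ} {p' q' t : ℝ}
    (hp : HasDerivAt p p' t) (hq : HasDerivAt q q' t) :
    HasDerivAt (fun s => w (p s) (q s))
      (p' * ptd w (p t) (q t) + q' * pxd w (p t) (q t)) t := by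
  have h := (hw.differentiable (by simp) (p t, q t)).hasFDerivAt
  have h3 := h.comp_hasDerivAt t (hp.prodMk hq)
  refine h3.congr_deriv ?_
  have he : (p', q') = p' • ((1:ℝ),(0:ℝ)) + q' • ((0:ℝ),(1:ℝ)) := by
    simp [Prod.ext_iff]
  rw [he, map_add, map_smul, map_smul, ptd_eq w hw, pxd_eq w hw]
  simp [smul_eq_mul]

lemma pxd_smooth_s10 (w : ℝ → ℝ → ℝ) (hw : ContDiff ℝ (⊤ : ℕ∞) (uncurry w)) :
    ContDiff ℝ (⊤ : ℕ∞) (uncurry (pxd w)) := by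
  have h1 : ContDiff ℝ (⊤ : ℕ∞) (fun p : ℝ × ℝ => fderiv ℝ (uncurry w) p) := hw.fderiv_right (by simp)
  have h2 : ContDiff ℝ (⊤ : ℕ∞) (fun p : ℝ × ℝ => fderiv ℝ (uncurry w) p ((0:ℝ),(1:ℝ))) :=
    h1.clm_apply contDiff_const
  have he : uncurry (pxd w) = fun p : ℝ × ℝ => fderiv ℝ (uncurry w) p ((0:ℝ),(1:ℝ)) := by
    funext p
    exact pxd_eq w hw p.1 p.2
  rw [he]
  exact h2

set_option maxHeartbeats 1000000 in
theorem stmt10 (α β γ δ κ μ₁ μ₀ : ℝ) (hΔ : α * δ - β * γ ≠ 0) (hκ : κ ≠ 0)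
    (f u ft ut : ℝ → ℝ → ℝ)
    (hf : ContDiff ℝ (⊤ : ℕ∞) (Function.uncurry f)) (hfne : ∀ t x, f t x ≠ 0)
    (hu : ContDiff ℝ (⊤ : ℕ∞) (Function.uncurry u))
    (hut : ContDiff ℝ (⊤ : ℕ∞) (Function.uncurry ut))
    (hft : ContDiff ℝ (⊤ : ℕ∞) (Function.uncurry ft))
    (hsol : ∀ t x, ptd u t x + u t x * pxd u t x + f t x * pxd (pxd u) t x = 0)
    (hudef : ∀ t x, γ * t + δ ≠ 0 →
      ut ((α * t + β) / (γ * t + δ)) ((κ * x + μ₁ * t + μ₀) / (γ * t + δ))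
        = (κ * (γ * t + δ) * u t x - κ * γ * x + μ₁ * δ - μ₀ * γ) / (α * δ - β * γ))
    (hfdef : ∀ t x, γ * t + δ ≠ 0 →
      ft ((α * t + β) / (γ * t + δ)) ((κ * x + μ₁ * t + μ₀) / (γ * t + δ))
        = κ ^ 2 / (α * δ - β * γ) * f t x) :
    ∀ t x, γ * t + δ ≠ 0 →
      ptd ut ((α * t + β) / (γ * t + δ)) ((κ * x + μ₁ * t + μ₀) / (γ * t + δ))
      + ut ((α * t + β) / (γ * t + δ)) ((κ * x + μ₁ * t + μ₀) / (γ * t + δ))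
        * pxd ut ((α * t + β) / (γ * t + δ)) ((κ * x + μ₁ * t + μ₀) / (γ * t + δ))
      + ft ((α * t + β) / (γ * t + δ)) ((κ * x + μ₁ * t + μ₀) / (γ * t + δ))
        * pxd (pxd ut) ((α * t + β) / (γ * t + δ)) ((κ * x + μ₁ * t + μ₀) / (γ * t + δ))
      = 0 := by
  intro t x h
  have h' : t * γ + δ ≠ 0 := by rwa [mul_comm] at h
  -- slice derivative helpers
  have hux : ∀ y, HasDerivAt (fun z => u t z) (pxd u t y) y := by
    intro y
    have := chainD u hu (hasDerivAt_const y t) (hasDerivAt_id y)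
    simpa using this
  have hpux : ∀ y, HasDerivAt (fun z => pxd u t z) (pxd (pxd u) t y) y := by
    intro y
    have := chainD (pxd u) (pxd_smooth_s10 u hu) (hasDerivAt_const y t) (hasDerivAt_id y)
    simpa using this
  have hut' : HasDerivAt (fun s => u s x) (ptd u t x) t := by
    have := chainD u hu (hasDerivAt_id t) (hasDerivAt_const t x)
    simpa using this
  -- space variable map and its derivative (in y)
  have hq : ∀ y : ℝ, HasDerivAt (fun z => (κ * z + μ₁ * t + μ₀) / (γ * t + δ))
      (κ * 1 / (γ * t + δ)) y := by
    intro y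
    exact ((((hasDerivAt_id y).const_mul κ).add_const (μ₁ * t)).add_const μ₀).div_const _
  -- key1 : first space derivative, for all y
  have key1 : ∀ y, pxd ut ((α * t + β) / (γ * t + δ)) ((κ * y + μ₁ * t + μ₀) / (γ * t + δ))
      = (γ * t + δ) * ((γ * t + δ) * pxd u t y - γ) / (α * δ - β * γ) := by
    intro y
    have HL := chainD ut hut (hasDerivAt_const y ((α * t + β) / (γ * t + δ))) (hq y)
    have HR : HasDerivAt
        (fun z => (κ * (γ * t + δ) * u t z - κ * γ * z + μ₁ * δ - μ₀ * γ) / (α * δ - β * γ))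
        ((κ * (γ * t + δ) * pxd u t y - κ * γ * 1) / (α * δ - β * γ)) y := by
      exact ((((hux y).const_mul (κ * (γ * t + δ))).sub
        ((hasDerivAt_id y).const_mul (κ * γ))).add_const (μ₁ * δ)).sub_const (μ₀ * γ) |>.div_const _
    have hfe : (fun z : ℝ => ut ((α * t + β) / (γ * t + δ)) ((κ * z + μ₁ * t + μ₀) / (γ * t + δ)))
        = fun z => (κ * (γ * t + δ) * u t z - κ * γ * z + μ₁ * δ - μ₀ * γ) / (α * δ - β * γ) :=
      funext fun z => hudef t z h
    rw [hfe] at HL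
    have raw := HL.unique HR
    field_simp at raw ⊢
    apply mul_left_cancel₀ hκ
    linear_combination raw
  -- key2 : second space derivative
  have key2 : pxd (pxd ut) ((α * t + β) / (γ * t + δ)) ((κ * x + μ₁ * t + μ₀) / (γ * t + δ))
      = (γ * t + δ) ^ 3 * pxd (pxd u) t x / (κ * (α * δ - β * γ)) := by
    have HL := chainD (pxd ut) (pxd_smooth_s10 ut hut)
      (hasDerivAt_const x ((α * t + β) / (γ * t + δ))) (hq x)
    have HR : HasDerivAt
        (fun z => (γ * t + δ) * ((γ * t + δ) * pxd u t z - γ) / (α * δ - β * γ))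
        ((γ * t + δ) * ((γ * t + δ) * pxd (pxd u) t x) / (α * δ - β * γ)) x := by
      exact ((((hpux x).const_mul (γ * t + δ)).sub_const γ).const_mul (γ * t + δ)).div_const _
    have hfe : (fun z : ℝ => pxd ut ((α * t + β) / (γ * t + δ)) ((κ * z + μ₁ * t + μ₀) / (γ * t + δ)))
        = fun z => (γ * t + δ) * ((γ * t + δ) * pxd u t z - γ) / (α * δ - β * γ) :=
      funext fun z => key1 z
    rw [hfe] at HL
    have raw := HL.unique HR
    simp only [zero_mul, zero_add] at raw
    field_simp at raw ⊢
    linear_combination raw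
  -- key3 : time derivative
  have hT : HasDerivAt (fun s => (α * s + β) / (γ * s + δ))
      ((α * 1 * (γ * t + δ) - (α * t + β) * (γ * 1)) / (γ * t + δ) ^ 2) t := by
    exact (((hasDerivAt_id t).const_mul α).add_const β).div
      (((hasDerivAt_id t).const_mul γ).add_const δ) h
  have hX : HasDerivAt (fun s => (κ * x + μ₁ * s + μ₀) / (γ * s + δ))
      ((μ₁ * 1 * (γ * t + δ) - (κ * x + μ₁ * t + μ₀) * (γ * 1)) / (γ * t + δ) ^ 2) t := by
    exact ((((hasDerivAt_id t).const_mul μ₁).const_add (κ * x)).add_const μ₀).div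
      (((hasDerivAt_id t).const_mul γ).add_const δ) h
  have key3raw : True := trivial
  have HL := chainD ut hut hT hX
  have HR : HasDerivAt
      (fun s => (κ * (γ * s + δ) * u s x - κ * γ * x + μ₁ * δ - μ₀ * γ) / (α * δ - β * γ))
      ((κ * (γ * 1) * u t x + κ * (γ * t + δ) * ptd u t x) / (α * δ - β * γ)) t := by
    exact ((((((hasDerivAt_id t).const_mul γ).add_const δ).const_mul κ).mul hut').sub_const
      (κ * γ * x) |>.add_const (μ₁ * δ) |>.sub_const (μ₀ * γ)).div_const _
  have hEv : (fun s => ut ((α * s + β) / (γ * s + δ)) ((κ * x + μ₁ * s + μ₀) / (γ * s + δ)))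
      =ᶠ[nhds t] fun s => (κ * (γ * s + δ) * u s x - κ * γ * x + μ₁ * δ - μ₀ * γ) / (α * δ - β * γ) := by
    have hc : ContinuousAt (fun s : ℝ => γ * s + δ) t := by fun_prop
    filter_upwards [hc.eventually_ne h] with s hs using hudef s x hs
  have HR' := HR.congr_of_eventuallyEq hEv
  have raw := HL.unique HR'
  rw [hudef t x h, hfdef t x h, key2, key1 x]
  rw [key1 x] at raw
  have hΔ' : α * δ - γ * β ≠ 0 := by rwa [mul_comm γ β]
  field_simp at raw ⊢
  linear_combination raw
    + (κ * (γ * t + δ) ^ 3) * hsol t x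
end

section
/- Suppose the last determining equation (X¹·X¹_tt − 2(X¹_t)²)x² + 2(X¹·X⁰_tt − 2X¹_t·X⁰_t)x + 2f·X¹·X¹_t + 4T_t·V⁰⁰_t − (X⁰_t)² = 0 holds identically in x for smooth functions X¹ ≠ 0, X⁰, T, V⁰⁰ of t, where f = f(t,x) is such that the functions 1, x, x², f(t,·) are linearly independent over smooth functions of t (i.e., f_xxx ≠ 0 somewhere on every time slice). Then X¹_t = 0, X⁰_tt = 0, and V⁰⁰_t = (X⁰_t)²/(4T_t); in particular X¹ is constant and X⁰ is affine in t. -/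
theorem stmt15 (X1 X0 T V00 : ℝ → ℝ) (f : ℝ → ℝ → ℝ)
    (hX1 : ContDiff ℝ (⊤ : ℕ∞) X1) (hX0 : ContDiff ℝ (⊤ : ℕ∞) X0)
    (hT : ContDiff ℝ (⊤ : ℕ∞) T) (hV00 : ContDiff ℝ (⊤ : ℕ∞) V00)
    (hf : ContDiff ℝ (⊤ : ℕ∞) (Function.uncurry f))
    (hX1ne : ∀ t, X1 t ≠ 0) (hTt : ∀ t, deriv T t ≠ 0)
    (hindep : ∀ t, ∀ a b c d : ℝ,
      (∀ x, a + b * x + c * x ^ 2 + d * f t x = 0) → a = 0 ∧ b = 0 ∧ c = 0 ∧ d = 0)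
    (heq : ∀ t x,
      (X1 t * deriv (deriv X1) t - 2 * (deriv X1 t) ^ 2) * x ^ 2
      + 2 * (X1 t * deriv (deriv X0) t - 2 * deriv X1 t * deriv X0 t) * x
      + 2 * f t x * X1 t * deriv X1 t
      + 4 * deriv T t * deriv V00 t - (deriv X0 t) ^ 2 = 0) :
    ∀ t, deriv X1 t = 0 ∧ deriv (deriv X0) t = 0 ∧
      deriv V00 t = (deriv X0 t) ^ 2 / (4 * deriv T t) := by
  intro t
  obtain ⟨ha, hb, hc, hd⟩ := hindep t
    (4 * deriv T t * deriv V00 t - (deriv X0 t) ^ 2)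
    (2 * (X1 t * deriv (deriv X0) t - 2 * deriv X1 t * deriv X0 t))
    (X1 t * deriv (deriv X1) t - 2 * (deriv X1 t) ^ 2)
    (2 * X1 t * deriv X1 t)
    (fun x => by have := heq t x; ring_nf at this ⊢; linarith)
  have hX1t : deriv X1 t = 0 := by
    have h2 : (2 : ℝ) * X1 t ≠ 0 := by
      simpa using mul_ne_zero two_ne_zero (hX1ne t)
    have := mul_eq_zero.mp (by linarith [hd] : (2 * X1 t) * deriv X1 t = 0)
    tauto
  refine ⟨hX1t, ?_, ?_⟩
  · rw [hX1t] at hb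
    have : X1 t * deriv (deriv X0) t = 0 := by linarith
    exact (mul_eq_zero.mp this).resolve_left (hX1ne t)
  · have h4 : (4 : ℝ) * deriv T t ≠ 0 := mul_ne_zero (by norm_num) (hTt t)
    field_simp
    rw [eq_div_iff (hTt t)]
    linarith
end
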